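/- Let A ∈ ℝ^{n×n}, B ∈ ℝ^{n×m}, C ∈ ℝ^{m×n}, D ∈ ℝ^{m×m}. Suppose P ∈ S^n and Π ∈ Π^* are such that the symmetric matrix [[P A + A^T P, P B],[B^T P, 0]] + [[C, D],[0, I_m]]^T Π [[C, D],[0, I_m]] is negative definite. Then for every pair (x, w) ∈ ℝ^n × ℝ^m with (x, w) ≠ 0 and w = Φ(C x + D w), one has x^T (P A + A^T P) x + 2 x^T P B w < 0. -/

import Mathlib

open Matrix

/-- The rectified linear unit (ReLU) map, applied componentwise. -/
noncomputable def relu {m : ℕ} (q : Fin m → ℝ) : Fin m → ℝ := fun i => max (q i) 0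

/-- The multiplier class `Π^*`: symmetric matrices `Π` with
`(ζ, Φ(ζ))ᵀ Π (ζ, Φ(ζ)) ≥ 0` for all `ζ ∈ ℝ^m`. -/
def PiStar (m : ℕ) : Set (Matrix (Fin m ⊕ Fin m) (Fin m ⊕ Fin m) ℝ) :=
  {P | P.IsSymm ∧ ∀ ζ : Fin m → ℝ,
    0 ≤ (Sum.elim ζ (relu ζ)) ⬝ᵥ (P.mulVec (Sum.elim ζ (relu ζ)))}

/-! Evaluate the negative definite form at `(x, w)`. The multiplier term is the `Π`-form at
`(C x + D w, Φ(C x + D w))`, a point of the ReLU graph, so it is nonnegative; hence the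
remaining Lyapunov term is negative. -/

section QuadraticForms

variable {l m n R : Type*}

theorem dotProduct_transpose_mul_mul_mulVec [Fintype m] [Fintype n] [CommSemiring R]
    (E : Matrix m n R) (M : Matrix m m R) (z : n → R) :
    z ⬝ᵥ (Eᵀ * M * E) *ᵥ z = (E *ᵥ z) ⬝ᵥ M *ᵥ (E *ᵥ z) := by
  rw [← mulVec_mulVec, ← mulVec_mulVec, dotProduct_mulVec z Eᵀ, vecMul_transpose]

theorem fromBlocks_mulVec_sumElim [Fintype l] [Fintype m] [NonUnitalNonAssocSemiring R]
    (A : Matrix n l R) (B : Matrix n m R) (C : Matrix m l R) (D : Matrix m m R)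
    (x : l → R) (w : m → R) :
    fromBlocks A B C D *ᵥ Sum.elim x w = Sum.elim (A *ᵥ x + B *ᵥ w) (C *ᵥ x + D *ᵥ w) := by
  rw [fromBlocks_mulVec, Sum.elim_comp_inl, Sum.elim_comp_inr]

theorem sumElim_dotProduct_fromBlocks_transpose_mulVec [Fintype m] [Fintype n] [CommSemiring R]
    (M : Matrix n n R) (N : Matrix n m R) (x : n → R) (w : m → R) :
    Sum.elim x w ⬝ᵥ fromBlocks M N Nᵀ 0 *ᵥ Sum.elim x w = x ⬝ᵥ M *ᵥ x + 2 * (x ⬝ᵥ N *ᵥ w) := by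
  rw [fromBlocks_mulVec_sumElim, sumElim_dotProduct_sumElim, zero_mulVec, add_zero,
    dotProduct_add, dotProduct_transpose_mulVec]
  ring

end QuadraticForms

theorem dotProduct_transpose_mul_mul_mulVec_nonneg_of_mem_PiStar {m : ℕ} {ι : Type*}
    [Fintype ι] {Pi : Matrix (Fin m ⊕ Fin m) (Fin m ⊕ Fin m) ℝ} (hPi : Pi ∈ PiStar m)
    (E : Matrix (Fin m ⊕ Fin m) ι ℝ) {z : ι → ℝ} {ζ : Fin m → ℝ}
    (hz : E *ᵥ z = Sum.elim ζ (relu ζ)) :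
    0 ≤ z ⬝ᵥ (Eᵀ * Pi * E) *ᵥ z := by
  rw [dotProduct_transpose_mul_mul_mulVec, hz]
  exact hPi.2 ζ

/-- If `P ∈ S^n` and `Π ∈ Π^*` make
`[[PA + AᵀP, PB],[BᵀP, 0]] + [[C, D],[0, I]]ᵀ Π [[C, D],[0, I]]` negative definite,
then for every `(x, w) ≠ 0` with `w = Φ(C x + D w)` one has
`xᵀ(PA + AᵀP)x + 2 xᵀ P B w < 0`. -/
theorem quadratic_negative_of_negdef_LMI {n m : ℕ}
    (A : Matrix (Fin n) (Fin n) ℝ) (B : Matrix (Fin n) (Fin m) ℝ)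
    (C : Matrix (Fin m) (Fin n) ℝ) (D : Matrix (Fin m) (Fin m) ℝ)
    (P : Matrix (Fin n) (Fin n) ℝ) (hP : P.IsSymm)
    (Pi : Matrix (Fin m ⊕ Fin m) (Fin m ⊕ Fin m) ℝ) (hPi : Pi ∈ PiStar m)
    (hLMI : (-(fromBlocks (P * A + Aᵀ * P) (P * B) (Bᵀ * P) 0 +
        (fromBlocks C D 0 (1 : Matrix (Fin m) (Fin m) ℝ))ᵀ * Pi *
          fromBlocks C D 0 (1 : Matrix (Fin m) (Fin m) ℝ))).PosDef)
    (x : Fin n → ℝ) (w : Fin m → ℝ) (hxw : Sum.elim x w ≠ 0)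
    (hw : w = relu (C.mulVec x + D.mulVec w)) :
    x ⬝ᵥ ((P * A + Aᵀ * P).mulVec x) + 2 * (x ⬝ᵥ ((P * B).mulVec w)) < 0 := by
  have hgraph : fromBlocks C D 0 (1 : Matrix (Fin m) (Fin m) ℝ) *ᵥ Sum.elim x w =
      Sum.elim (C *ᵥ x + D *ᵥ w) (relu (C *ᵥ x + D *ᵥ w)) := by
    rw [fromBlocks_mulVec_sumElim, zero_mulVec, one_mulVec, zero_add, ← hw]
  have hBP : Bᵀ * P = (P * B)ᵀ := by rw [transpose_mul, hP.eq]
  have hpos := hLMI.dotProduct_mulVec_pos hxw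
  rw [star_trivial, neg_mulVec, dotProduct_neg, add_mulVec, dotProduct_add, hBP,
    sumElim_dotProduct_fromBlocks_transpose_mulVec] at hpos
  linarith [dotProduct_transpose_mul_mul_mulVec_nonneg_of_mem_PiStar hPi _ hgraph]
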